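/- (Semidefinite representability of the peak power.) Let N ≥ 1, let q_k ∈ ℂ for k ∈ {−2N, …, 2N} satisfy the symmetry q_{−k} = conj(q_k) and q_0 = 0, and define the trigonometric polynomial q(z) = ∑_{k=−2N}^{2N} q_k z^{−k} (real-valued on the unit circle). Let θ ∈ ℝ. Then θ ≥ max_{|z|=1} |q(z)| if and only if there exist positive semidefinite Hermitian matrices Q_1, Q_2 ∈ ℂ^{(2N+1)×(2N+1)} such that θ = tr(Λ_0 Q_1), q_k = tr(Λ_k Q_1) for all k ≠ 0, θ = tr(Λ_0 Q_2), and −q_k = tr(Λ_k Q_2) for all k ≠ 0, where Λ_k is the (2N+1)×(2N+1) elementary Toeplitz matrix with (Λ_k)_{ij} = 1 if j − i = k and 0 otherwise. -/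

import Mathlib

/-!
Since `q_{-k} = q̄_k`, `q` is real on the circle, so `θ ≥ max |q|` says that the trigonometric
polynomials `θ + q` and `θ - q` are nonnegative there. A trigonometric polynomial
`g(z) = ∑_{|k| ≤ M} g_k z^{-k}` is nonnegative on the circle iff `g_k = tr (Λ_k Q)` for some
`Q ⪰ 0`: for every `Q`, `∑_k tr (Λ_k Q) z^{-k} = v* Q v` with `v = (z^i)_{i ≤ M}`, and conversely
the Fejér–Riesz factorisation `g = |h|²` with `deg h ≤ M` gives the rank-one `Q = ā aᵀ`, `a` the
coefficients of `h`. Fejér–Riesz is proved by induction on `M` on the polynomial `z^M g(z)`: its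
coefficients are conjugate-symmetric, so its roots come in pairs `ρ, 1/ρ̄`, a root on the circle
being double because `g ≥ 0` has a minimum there, and each pair splits off a factor `|z - ρ|²`.
-/

open Matrix BigOperators ComplexOrder

/-- The elementary Toeplitz matrix `Λ_k` of size `(n+1) × (n+1)`:
`(Λ_k)_{ij} = 1` if `j - i = k` and `0` otherwise. -/
def elemToeplitz (n : ℕ) (k : ℤ) : Matrix (Fin (n + 1)) (Fin (n + 1)) ℂ :=
  Matrix.of fun i j => if (j : ℤ) - (i : ℤ) = k then 1 else 0

open Polynomial Complex ComplexConjugate Filter Topology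

lemma infinite_setOf_norm_eq_one : {z : ℂ | ‖z‖ = 1}.Infinite := by
  have hinj : Set.InjOn (fun t : ℝ => (Circle.exp t : ℂ)) (Set.Icc 0 1) :=
    Subtype.val_injective.comp_injOn (Circle.exp_injOn_Icc (by linarith [Real.pi_gt_three]))
  refine ((Set.Icc_infinite zero_lt_one).image hinj).mono ?_
  rintro _ ⟨t, -, rfl⟩
  exact Circle.norm_coe _

lemma Polynomial.eq_of_eval_eq_on_circle {p q : ℂ[X]}
    (h : ∀ z : ℂ, ‖z‖ = 1 → p.eval z = q.eval z) : p = q :=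
  eq_of_infinite_eval_eq p q (infinite_setOf_norm_eq_one.mono h)

lemma ne_zero_of_norm_eq_one {z : ℂ} (hz : ‖z‖ = 1) : z ≠ 0 :=
  norm_ne_zero_iff.mp (hz ▸ one_ne_zero)

lemma mul_conj_of_norm_eq_one {z : ℂ} (hz : ‖z‖ = 1) : z * conj z = 1 := by
  rw [← inv_eq_conj hz, mul_inv_cancel₀ (ne_zero_of_norm_eq_one hz)]

lemma mul_conj_pow_of_norm_eq_one {z : ℂ} (hz : ‖z‖ = 1) (n : ℕ) : z ^ n * conj z ^ n = 1 := by
  rw [← mul_pow, mul_conj_of_norm_eq_one hz, one_pow]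

lemma sub_mul_sub_inv_conj_of_norm_eq_one {z ρ : ℂ} (hz : ‖z‖ = 1) (hρ : ρ ≠ 0) :
    (z - ρ) * (z - (conj ρ)⁻¹) = z * ((z - ρ) * conj (z - ρ)) * -(conj ρ)⁻¹ := by
  have hz0 : z ≠ 0 := ne_zero_of_norm_eq_one hz
  have hρ' : conj ρ ≠ 0 := by simpa using hρ
  rw [map_sub, ← inv_eq_conj hz]
  field_simp
  ring

lemma norm_le_iff_nonneg_add_and_nonneg_sub {w : ℂ} (hw : conj w = w) {θ : ℝ} :
    ‖w‖ ≤ θ ↔ 0 ≤ (θ : ℂ) + w ∧ 0 ≤ (θ : ℂ) - w := by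
  obtain ⟨x, rfl⟩ := conj_eq_iff_real.mp hw
  rw [norm_real, Real.norm_eq_abs, ← ofReal_add, ← ofReal_sub, zero_le_real,
    zero_le_real, abs_le]
  constructor <;> intro h <;> constructor <;> linarith [h.1, h.2]

lemma HasDerivAt.eq_zero_of_nonneg_of_eq_zero {g : ℝ → ℂ} {g' : ℂ} {t₀ : ℝ}
    (hg : HasDerivAt g g' t₀) (hnn : ∀ t, 0 ≤ g t) (h0 : g t₀ = 0) : g' = 0 := by
  have hslope := hasDerivAt_iff_tendsto_slope.mp hg
  have hslope_eq : ∀ t, slope g t₀ t = (t - t₀)⁻¹ • g t := fun t => by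
    rw [slope_def_module, h0, sub_zero]
  refine le_antisymm ?_ ?_
  · have hleft : Tendsto (slope g t₀) (𝓝[<] t₀) (𝓝 g') :=
      hslope.mono_left (nhdsWithin_mono _ fun t (ht : t < t₀) => ht.ne)
    refine le_of_tendsto hleft ?_
    filter_upwards [self_mem_nhdsWithin] with t (ht : t < t₀)
    rw [hslope_eq]
    exact smul_nonpos_of_nonpos_of_nonneg (inv_nonpos.mpr (sub_nonpos.mpr ht.le)) (hnn t)
  · have hright : Tendsto (slope g t₀) (𝓝[>] t₀) (𝓝 g') :=
      hslope.mono_left (nhdsWithin_mono _ fun t (ht : t₀ < t) => ht.ne')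
    refine ge_of_tendsto hright ?_
    filter_upwards [self_mem_nhdsWithin] with t (ht : t₀ < t)
    rw [hslope_eq]
    exact smul_nonneg (inv_nonneg.mpr (sub_nonneg.mpr ht.le)) (hnn t)

lemma Continuous.nonneg_on_circle_of_ne {f : ℂ → ℂ} (hf : Continuous f) {ρ : ℂ}
    (h : ∀ z : ℂ, ‖z‖ = 1 → z ≠ ρ → 0 ≤ f z) {z : ℂ} (hz : ‖z‖ = 1) : 0 ≤ f z := by
  rcases ne_or_eq z ρ with hzρ | rfl
  · exact h z hz hzρ
  have hlim : Tendsto (fun t : ℝ => f (z * exp (t * I))) (𝓝[>] 0) (𝓝 (f z)) := by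
    have : Continuous (fun t : ℝ => f (z * exp (t * I))) := by fun_prop
    simpa using (this.tendsto 0).mono_left nhdsWithin_le_nhds
  refine ge_of_tendsto hlim ?_
  filter_upwards [Ioo_mem_nhdsGT Real.pi_pos] with t ht
  refine h _ (by simp [hz, norm_exp_ofReal_mul_I]) fun heq => ?_
  have hz0 : z ≠ 0 := ne_zero_of_norm_eq_one hz
  have h1 : exp (t * I) = 1 := mul_left_cancel₀ hz0 (heq.trans (mul_one z).symm)
  have h2 := congrArg Complex.im h1
  rw [exp_ofReal_mul_I_im, one_im] at h2
  exact (Real.sin_pos_of_pos_of_lt_pi ht.1 ht.2).ne' h2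

namespace Polynomial

lemma eval_reflect_map_conj {P : ℂ[X]} {N : ℕ} (hdeg : P.natDegree ≤ N) {w : ℂ}
    (hw : w ≠ 0) :
    ((P.map (starRingEnd ℂ)).reflect N).eval w = w ^ N * conj (P.eval (conj w)⁻¹) := by
  let := invertibleOfNonzero (inv_ne_zero hw)
  have h := eval₂_reflect_mul_pow (RingHom.id ℂ) w⁻¹ N (P.map (starRingEnd ℂ))
    (natDegree_map_le.trans hdeg)
  have hmap : (P.map (starRingEnd ℂ)).eval w⁻¹ = conj (P.eval (conj w)⁻¹) := by
    rw [← eval_map_apply, map_inv₀, conj_conj]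
  rw [invOf_eq_inv, inv_inv, ← eval, ← eval, hmap] at h
  rw [← h, mul_left_comm, ← mul_pow, mul_inv_cancel₀ hw, one_pow, mul_one]

variable {P : ℂ[X]} {n : ℕ}

lemma eval_derivative_eq_zero_of_nonneg_on_circle
    (hP : ∀ z : ℂ, ‖z‖ = 1 → 0 ≤ P.eval z * conj z ^ n) {ρ : ℂ} (hρ : ‖ρ‖ = 1)
    (hroot : P.eval ρ = 0) : P.derivative.eval ρ = 0 := by
  -- `G t = P(ρ e^{it}) (ρ e^{it})‾ⁿ ≥ 0` vanishes at `t = 0`, so its derivative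
  -- `P'(ρ) · iρ · ρ̄ⁿ` there is zero
  set G : ℂ → ℂ := fun w => P.eval (ρ * exp (w * I)) * (conj ρ * exp (-(w * I))) ^ n
  have hG : HasDerivAt G (P.derivative.eval ρ * (ρ * I) * conj ρ ^ n) ((0 : ℝ) : ℂ) := by
    have hcurve : HasDerivAt (fun w : ℂ => ρ * exp (w * I)) (ρ * I) 0 := by
      simpa using (hasDerivAt_mul_const (x := (0 : ℂ)) I).cexp.const_mul ρ
    have h1 := (P.hasDerivAt (ρ * exp (0 * I))).comp (0 : ℂ) hcurve
    have h2 : HasDerivAt (fun w : ℂ => (conj ρ * exp (-(w * I))) ^ n) _ 0 :=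
      ((hasDerivAt_mul_const I).neg.cexp.const_mul (conj ρ)).pow n
    rw [ofReal_zero]
    exact (h1.mul h2).congr_deriv (by simp [hroot])
  have hρ0 : ρ ≠ 0 := ne_zero_of_norm_eq_one hρ
  have key := hG.comp_ofReal.eq_zero_of_nonneg_of_eq_zero (fun t => ?_) (by simp [G, hroot])
  · simpa [hρ0, I_ne_zero] using key
  have hconj : conj (ρ * exp (t * I)) = conj ρ * exp (-(t * I)) := by
    rw [map_mul, ← Complex.exp_conj, map_mul, conj_ofReal, conj_I, mul_neg]
  simpa [G, hconj] using hP (ρ * exp (t * I)) (by simp [hρ, norm_exp_ofReal_mul_I])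

lemma reflect_map_conj_eq_self_of_nonneg_on_circle (hdeg : P.natDegree ≤ 2 * n)
    (hP : ∀ z : ℂ, ‖z‖ = 1 → 0 ≤ P.eval z * conj z ^ n) :
    (P.map (starRingEnd ℂ)).reflect (2 * n) = P := by
  -- `P(z) z̄ⁿ` is real, so `P(z) = z²ⁿ (P(z))‾ = z²ⁿ P̄(1/z)` on the circle
  refine eq_of_eval_eq_on_circle fun z hz => ?_
  have hz0 : z ≠ 0 := ne_zero_of_norm_eq_one hz
  have hreal : conj (P.eval z * conj z ^ n) = P.eval z * conj z ^ n :=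
    conj_eq_iff_im.mpr (nonneg_iff.mp (hP z hz)).2.symm
  rw [map_mul, map_pow, conj_conj] at hreal
  rw [eval_reflect_map_conj hdeg hz0, ← inv_eq_conj hz, inv_inv]
  linear_combination (z ^ n) * hreal + P.eval z * mul_conj_pow_of_norm_eq_one hz n

lemma coeff_two_mul_eq_conj_coeff_zero_of_nonneg_on_circle (hdeg : P.natDegree ≤ 2 * n)
    (hP : ∀ z : ℂ, ‖z‖ = 1 → 0 ≤ P.eval z * conj z ^ n) :
    P.coeff (2 * n) = conj (P.coeff 0) := by
  conv_lhs => rw [← reflect_map_conj_eq_self_of_nonneg_on_circle hdeg hP]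
  rw [coeff_reflect, revAt_le le_rfl, Nat.sub_self, coeff_map]

lemma exists_root_pair_dvd_of_nonneg_on_circle (hdeg : P.natDegree ≤ 2 * (n + 1))
    (hP : ∀ z : ℂ, ‖z‖ = 1 → 0 ≤ P.eval z * conj z ^ (n + 1)) (h0 : P.coeff 0 ≠ 0) :
    ∃ ρ : ℂ, ρ ≠ 0 ∧ (X - C ρ) * (X - C (conj ρ)⁻¹) ∣ P := by
  have hP0 : P ≠ 0 := fun h => h0 (by simp [h])
  have htop : P.coeff (2 * (n + 1)) ≠ 0 := by
    simpa [coeff_two_mul_eq_conj_coeff_zero_of_nonneg_on_circle hdeg hP] using h0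
  obtain ⟨ρ, hρ⟩ := Complex.exists_root
    (natDegree_pos_iff_degree_pos.mp ((by omega : 0 < 2 * (n + 1)).trans_le
      (le_natDegree_of_ne_zero htop)))
  have hρ0 : ρ ≠ 0 := by
    rintro rfl
    exact h0 (by rwa [coeff_zero_eq_eval_zero])
  -- the coefficient symmetry of `P` makes `ρ ↦ 1 / ρ̄` permute its roots
  have hρ' : P.IsRoot (conj ρ)⁻¹ := by
    rw [IsRoot, ← reflect_map_conj_eq_self_of_nonneg_on_circle hdeg hP,
      eval_reflect_map_conj hdeg (by simpa using hρ0), map_inv₀, conj_conj, inv_inv, hρ.eq_zero,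
      map_zero, mul_zero]
  refine ⟨ρ, hρ0, ?_⟩
  by_cases heq : (conj ρ)⁻¹ = ρ
  · have hnorm : ‖ρ‖ = 1 := by
      have h := congrArg norm heq
      rw [norm_inv, norm_conj] at h
      have hpos : 0 < ‖ρ‖ := norm_pos_iff.mpr hρ0
      field_simp at h
      nlinarith
    have hder := eval_derivative_eq_zero_of_nonneg_on_circle hP hnorm hρ
    rw [heq, ← sq, ← le_rootMultiplicity_iff hP0]
    exact (one_lt_rootMultiplicity_iff_isRoot hP0).mpr ⟨hρ, hder⟩
  · exact (isCoprime_X_sub_C_of_isUnit_sub (sub_ne_zero.mpr (Ne.symm heq)).isUnit).mul_dvd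
      (dvd_iff_isRoot.mpr hρ) (dvd_iff_isRoot.mpr hρ')

lemma exists_sub_factor_of_nonneg_on_circle (hdeg : P.natDegree ≤ 2 * (n + 1))
    (hP : ∀ z : ℂ, ‖z‖ = 1 → 0 ≤ P.eval z * conj z ^ (n + 1)) (h0 : P.coeff 0 ≠ 0) :
    ∃ ρ : ℂ, ∃ P₂ : ℂ[X], P₂.natDegree ≤ 2 * n ∧ ∀ z : ℂ, ‖z‖ = 1 →
      P.eval z * conj z ^ (n + 1) = (z - ρ) * conj (z - ρ) * (P₂.eval z * conj z ^ n) := by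
  obtain ⟨ρ, hρ0, P₁, hP₁⟩ := exists_root_pair_dvd_of_nonneg_on_circle hdeg hP h0
  refine ⟨ρ, C (-(conj ρ)⁻¹) * P₁, ?_, fun z hz => ?_⟩
  · have hP₁0 : P₁ ≠ 0 := by rintro rfl; exact h0 (by simp [hP₁])
    have hdeg₁ :=
      natDegree_mul (mul_ne_zero (X_sub_C_ne_zero ρ) (X_sub_C_ne_zero (conj ρ)⁻¹)) hP₁0
    rw [← hP₁, natDegree_mul (X_sub_C_ne_zero ρ) (X_sub_C_ne_zero _), natDegree_X_sub_C,
      natDegree_X_sub_C] at hdeg₁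
    exact (natDegree_C_mul_le _ _).trans (by omega)
  have hzz : z * conj z = 1 := mul_conj_of_norm_eq_one hz
  calc P.eval z * conj z ^ (n + 1)
      = (z - ρ) * (z - (conj ρ)⁻¹) * P₁.eval z * conj z ^ (n + 1) := by simp [hP₁]
    _ = z * conj z * ((z - ρ) * conj (z - ρ)) *
          ((C (-(conj ρ)⁻¹) * P₁).eval z * conj z ^ n) := by
      rw [sub_mul_sub_inv_conj_of_norm_eq_one hz hρ0, eval_mul, eval_C, pow_succ]
      ring
    _ = (z - ρ) * conj (z - ρ) * ((C (-(conj ρ)⁻¹) * P₁).eval z * conj z ^ n) := by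
      rw [hzz, one_mul]

lemma nonneg_on_circle_of_sub_mul_conj_mul_nonneg {Q : ℂ[X]} {ρ : ℂ}
    (h : ∀ z : ℂ, ‖z‖ = 1 → 0 ≤ (z - ρ) * conj (z - ρ) * (Q.eval z * conj z ^ n)) :
    ∀ z : ℂ, ‖z‖ = 1 → 0 ≤ Q.eval z * conj z ^ n := by
  -- off `ρ` divide by `|z - ρ|² > 0`; at `ρ` itself use continuity
  intro w hw
  refine Continuous.nonneg_on_circle_of_ne (f := fun z => Q.eval z * conj z ^ n) (ρ := ρ)
    (by fun_prop) (fun z hz hzρ => ?_) hw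
  have hr : 0 < normSq (z - ρ) := normSq_pos.mpr (sub_ne_zero.mpr hzρ)
  have hdiv : Q.eval z * conj z ^ n
      = ((normSq (z - ρ))⁻¹ : ℝ) * ((z - ρ) * conj (z - ρ) * (Q.eval z * conj z ^ n)) := by
    rw [mul_conj]
    push_cast
    field_simp
  rw [hdiv]
  exact mul_nonneg (zero_le_real.mpr (inv_nonneg.mpr hr.le)) (h z hz)

lemma exists_factor_of_nonneg_on_circle (hdeg : P.natDegree ≤ 2 * (n + 1))
    (hP : ∀ z : ℂ, ‖z‖ = 1 → 0 ≤ P.eval z * conj z ^ (n + 1)) :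
    ∃ ℓ P₂ : ℂ[X], ℓ.natDegree ≤ 1 ∧ P₂.natDegree ≤ 2 * n ∧
      (∀ z : ℂ, ‖z‖ = 1 → 0 ≤ P₂.eval z * conj z ^ n) ∧
      ∀ z : ℂ, ‖z‖ = 1 →
        P.eval z * conj z ^ (n + 1) = ℓ.eval z * conj (ℓ.eval z) * (P₂.eval z * conj z ^ n) := by
  by_cases h0 : P.coeff 0 = 0
  · have htop : P.coeff (2 * (n + 1)) = 0 := by
      simp [coeff_two_mul_eq_conj_coeff_zero_of_nonneg_on_circle hdeg hP, h0]
    have heval : ∀ z : ℂ, ‖z‖ = 1 →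
        P.eval z * conj z ^ (n + 1) = P.divX.eval z * conj z ^ n := by
      intro z hz
      have hzz : z * conj z = 1 := mul_conj_of_norm_eq_one hz
      conv_lhs => rw [← divX_mul_X_add P]
      rw [h0, C_0, add_zero, eval_mul, eval_X, pow_succ]
      linear_combination (P.divX.eval z * conj z ^ n) * hzz
    refine ⟨1, P.divX, by simp, ?_, fun z hz => heval z hz ▸ hP z hz, fun z hz => ?_⟩
    · rw [natDegree_divX_eq_natDegree_tsub_one]
      have := natDegree_le_pred hdeg htop
      omega
    · simp [heval z hz]
  obtain ⟨ρ, P₂, hdeg₂, hfactor⟩ := exists_sub_factor_of_nonneg_on_circle hdeg hP h0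
  exact ⟨X - C ρ, P₂, by simp, hdeg₂,
    nonneg_on_circle_of_sub_mul_conj_mul_nonneg fun z hz => hfactor z hz ▸ hP z hz,
    by simpa using hfactor⟩

theorem fejer_riesz {n : ℕ} {P : ℂ[X]} (hdeg : P.natDegree ≤ 2 * n)
    (hP : ∀ z : ℂ, ‖z‖ = 1 → 0 ≤ P.eval z * conj z ^ n) :
    ∃ h : ℂ[X], h.natDegree ≤ n ∧
      ∀ z : ℂ, ‖z‖ = 1 → P.eval z * conj z ^ n = h.eval z * conj (h.eval z) := by
  induction n generalizing P with
  | zero =>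
    obtain ⟨c, rfl⟩ := natDegree_eq_zero.mp (Nat.le_zero.mp hdeg)
    obtain ⟨r, hr, rfl⟩ := RCLike.nonneg_iff_exists_ofReal.mp (by simpa using hP 1 (by simp))
    refine ⟨C (Real.sqrt r : ℂ), by simp, fun z _ => ?_⟩
    simp [← ofReal_mul, Real.mul_self_sqrt hr]
  | succ n ih =>
    obtain ⟨ℓ, P₂, hℓ, hdeg₂, hP₂, hfactor⟩ := exists_factor_of_nonneg_on_circle hdeg hP
    obtain ⟨h, hh, hP₂h⟩ := ih hdeg₂ hP₂
    refine ⟨ℓ * h, natDegree_mul_le.trans (by omega), fun z hz => ?_⟩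
    rw [hfactor z hz, hP₂h z hz, eval_mul, map_mul]
    ring

end Polynomial

noncomputable def trigPoly (M : ℕ) (c : ℤ → ℂ) (z : ℂ) : ℂ :=
  ∑ k ∈ Finset.Icc (-(M : ℤ)) M, c k * z ^ (-k)

noncomputable def trigPoly.toPolynomial (M : ℕ) (c : ℤ → ℂ) : ℂ[X] :=
  ∑ j ∈ Finset.range (2 * M + 1), C (c (M - j)) * X ^ j

namespace trigPoly

variable {M : ℕ} {c : ℤ → ℂ}

lemma natDegree_toPolynomial_le : (toPolynomial M c).natDegree ≤ 2 * M :=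
  natDegree_sum_le_of_forall_le _ _ fun _ hj =>
    (natDegree_C_mul_X_pow_le _ _).trans (Nat.lt_succ_iff.mp (Finset.mem_range.mp hj))

lemma coeff_toPolynomial {j : ℕ} (hj : j ≤ 2 * M) :
    (toPolynomial M c).coeff j = c (M - j) := by
  simp [toPolynomial, finsetSum_coeff, Nat.lt_succ_of_le hj]

lemma eval_toPolynomial {z : ℂ} (hz : z ≠ 0) :
    (toPolynomial M c).eval z = z ^ M * trigPoly M c z := by
  rw [toPolynomial, eval_finsetSum, trigPoly, Finset.mul_sum]
  refine Finset.sum_nbij' (fun j => M - j) (fun k => (M - k).toNat) ?_ ?_ ?_ ?_ ?_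
  · intro j hj; simp only [Finset.mem_range, Finset.mem_Icc] at hj ⊢; omega
  · intro k hk; simp only [Finset.mem_range, Finset.mem_Icc] at hk ⊢; omega
  · intro j _; simp
  · intro k hk; simp only [Finset.mem_Icc] at hk; omega
  · intro j _
    simp only [eval_mul, eval_C, eval_pow, eval_X, neg_sub]
    rw [← zpow_natCast, ← zpow_natCast z M, mul_left_comm, ← zpow_add₀ hz]
    ring_nf

lemma eval_toPolynomial_mul_conj_pow {z : ℂ} (hz : ‖z‖ = 1) :
    (toPolynomial M c).eval z * conj z ^ M = trigPoly M c z := by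
  rw [eval_toPolynomial (ne_zero_of_norm_eq_one hz), mul_right_comm,
    mul_conj_pow_of_norm_eq_one hz, one_mul]

end trigPoly

section

variable {M : ℕ} {c : ℤ → ℂ}

lemma coeff_eq_of_trigPoly_eq_on_circle {d : ℤ → ℂ}
    (h : ∀ z : ℂ, ‖z‖ = 1 → trigPoly M c z = trigPoly M d z) :
    ∀ k ∈ Finset.Icc (-(M : ℤ)) M, c k = d k := by
  have hP : trigPoly.toPolynomial M c = trigPoly.toPolynomial M d :=
    eq_of_eval_eq_on_circle fun z hz => by
      have hz0 : z ≠ 0 := ne_zero_of_norm_eq_one hz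
      rw [trigPoly.eval_toPolynomial hz0, trigPoly.eval_toPolynomial hz0, h z hz]
  intro k hk
  rw [Finset.mem_Icc] at hk
  have := congrArg (coeff · (M - k).toNat) hP
  simp only [trigPoly.coeff_toPolynomial (show (M - k).toNat ≤ 2 * M by omega)] at this
  rwa [show (M : ℤ) - (M - k).toNat = k by omega] at this

lemma conj_trigPoly {z : ℂ} (hz : ‖z‖ = 1) :
    conj (trigPoly M c z) = trigPoly M (fun k => conj (c (-k))) z := by
  rw [trigPoly, map_sum, trigPoly]
  refine Finset.sum_nbij' (fun k => -k) (fun k => -k) ?_ ?_ ?_ ?_ ?_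
  · intro k hk; simp only [Finset.mem_Icc] at hk ⊢; omega
  · intro k hk; simp only [Finset.mem_Icc] at hk ⊢; omega
  · intro k _; simp
  · intro k _; simp
  intro k _
  simp [map_zpow₀, ← inv_eq_conj hz]

lemma trigPoly_add (d : ℤ → ℂ) {z : ℂ} :
    trigPoly M (c + d) z = trigPoly M c z + trigPoly M d z := by
  simp only [trigPoly, Pi.add_apply, add_mul, Finset.sum_add_distrib]

lemma trigPoly_neg {z : ℂ} : trigPoly M (-c) z = -trigPoly M c z := by
  simp only [trigPoly, Pi.neg_apply, neg_mul, Finset.sum_neg_distrib]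

lemma trigPoly_single_zero (a : ℂ) {z : ℂ} : trigPoly M (Pi.single 0 a) z = a := by
  rw [trigPoly, Finset.sum_eq_single_of_mem 0 (by simp)] <;> simp +contextual

lemma trace_elemToeplitz_mul (k : ℤ) (Q : Matrix (Fin (M + 1)) (Fin (M + 1)) ℂ) :
    (elemToeplitz M k * Q).trace =
      ∑ i : Fin (M + 1), ∑ j : Fin (M + 1), if ((j : ℕ) : ℤ) - (i : ℕ) = k then Q j i else 0 := by
  simp [Matrix.trace, Matrix.mul_apply, elemToeplitz, ite_mul]

lemma trigPoly_trace_elemToeplitz_mul (Q : Matrix (Fin (M + 1)) (Fin (M + 1)) ℂ) {z : ℂ}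
    (hz : ‖z‖ = 1) :
    trigPoly M (fun k => (elemToeplitz M k * Q).trace) z =
      star (fun i : Fin (M + 1) => z ^ (i : ℕ)) ⬝ᵥ Q *ᵥ fun i => z ^ (i : ℕ) := by
  have hz0 : z ≠ 0 := ne_zero_of_norm_eq_one hz
  have hdiag : ∀ i j : Fin (M + 1), ∑ k ∈ Finset.Icc (-(M : ℤ)) M,
      (if ((j : ℕ) : ℤ) - (i : ℕ) = k then Q j i * z ^ (-k) else 0) =
        conj z ^ (j : ℕ) * (Q j i * z ^ (i : ℕ)) := by
    intro i j
    rw [Finset.sum_ite_eq, if_pos (by simp only [Finset.mem_Icc]; omega), ← inv_eq_conj hz,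
      neg_sub, zpow_sub₀ hz0, zpow_natCast, zpow_natCast]
    ring
  simp only [trigPoly, trace_elemToeplitz_mul, Finset.sum_mul, ite_mul, zero_mul]
  rw [Finset.sum_comm]
  refine (Finset.sum_congr rfl fun i _ => Finset.sum_comm).trans ?_
  simp only [hdiag]
  rw [Finset.sum_comm]
  simp [dotProduct, mulVec, Finset.mul_sum]

theorem trigPoly_nonneg_on_circle_iff_exists_posSemidef (M : ℕ) (g : ℤ → ℂ) :
    (∀ z : ℂ, ‖z‖ = 1 → 0 ≤ trigPoly M g z) ↔
      ∃ Q : Matrix (Fin (M + 1)) (Fin (M + 1)) ℂ, Q.PosSemidef ∧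
        ∀ k ∈ Finset.Icc (-(M : ℤ)) M, g k = (elemToeplitz M k * Q).trace := by
  constructor
  · intro hg
    obtain ⟨h, hdeg, hh⟩ := fejer_riesz trigPoly.natDegree_toPolynomial_le fun z hz =>
      (trigPoly.eval_toPolynomial_mul_conj_pow hz).symm ▸ hg z hz
    set a : Fin (M + 1) → ℂ := fun i => h.coeff i
    have ha : ∀ z : ℂ, a ⬝ᵥ (fun i : Fin (M + 1) => z ^ (i : ℕ)) = h.eval z := fun z => by
      rw [eval_eq_sum_range' (Nat.lt_succ_of_le hdeg), ← Fin.sum_univ_eq_sum_range]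
      rfl
    refine ⟨vecMulVec (star a) a, posSemidef_vecMulVec_star_self a,
      coeff_eq_of_trigPoly_eq_on_circle fun z hz => ?_⟩
    rw [trigPoly_trace_elemToeplitz_mul _ hz, vecMulVec_mulVec, ha, dotProduct_smul,
      star_dotProduct_star, ha, ← trigPoly.eval_toPolynomial_mul_conj_pow hz, hh z hz]
    simp [mul_comm]
  · rintro ⟨Q, hQ, hgQ⟩ z hz
    have hg : trigPoly M g z = trigPoly M (fun k => (elemToeplitz M k * Q).trace) z :=
      Finset.sum_congr rfl fun k hk => by rw [hgQ k hk]
    rw [hg, trigPoly_trace_elemToeplitz_mul Q hz]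
    exact hQ.dotProduct_mulVec_nonneg _

end

lemma forall_single_add_eq_iff {s : Finset ℤ} (hs : 0 ∈ s) {c d : ℤ → ℂ} (hc : c 0 = 0)
    (a : ℂ) :
    (∀ k ∈ s, (Pi.single 0 a + c : ℤ → ℂ) k = d k) ↔
      a = d 0 ∧ ∀ k ∈ s, k ≠ 0 → c k = d k := by
  constructor
  · intro h
    exact ⟨by simpa [hc] using h 0 hs, fun k hk hk0 => by simpa [hk0] using h k hk⟩
  · rintro ⟨h0, h⟩ k hk
    rcases eq_or_ne k 0 with rfl | hk0
    · simpa [hc] using h0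
    · simpa [hk0] using h k hk hk0

theorem peak_power_semidefinite_representation_general (N : ℕ)
    (q : ℤ → ℂ) (hsymm : ∀ k : ℤ, q (-k) = star (q k)) (hq0 : q 0 = 0)
    (θ : ℝ) :
    (∀ z : ℂ, ‖z‖ = 1 →
        ‖∑ k ∈ Finset.Icc (-(2 * N : ℤ)) (2 * N : ℤ),
          q k * z ^ (-k)‖ ≤ θ) ↔
    (∃ Q₁ Q₂ : Matrix (Fin (2 * N + 1)) (Fin (2 * N + 1)) ℂ,
        Q₁.PosSemidef ∧ Q₂.PosSemidef ∧
        (θ : ℂ) = (elemToeplitz (2 * N) 0 * Q₁).trace ∧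
        (∀ k ∈ Finset.Icc (-(2 * N : ℤ)) (2 * N : ℤ), k ≠ 0 →
          q k = (elemToeplitz (2 * N) k * Q₁).trace) ∧
        (θ : ℂ) = (elemToeplitz (2 * N) 0 * Q₂).trace ∧
        (∀ k ∈ Finset.Icc (-(2 * N : ℤ)) (2 * N : ℤ), k ≠ 0 →
          -q k = (elemToeplitz (2 * N) k * Q₂).trace)) := by
  have hIcc : Finset.Icc (-(2 * N : ℤ)) (2 * N : ℤ)
      = Finset.Icc (-((2 * N : ℕ) : ℤ)) ((2 * N : ℕ) : ℤ) := by push_cast; rfl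
  have hreal : ∀ z : ℂ, ‖z‖ = 1 → conj (trigPoly (2 * N) q z) = trigPoly (2 * N) q z := by
    intro z hz
    simp [conj_trigPoly hz, hsymm]
  rw [hIcc]
  change (∀ z : ℂ, ‖z‖ = 1 → ‖trigPoly (2 * N) q z‖ ≤ θ) ↔ _
  calc _ ↔ (∀ z : ℂ, ‖z‖ = 1 → 0 ≤ trigPoly (2 * N) (Pi.single 0 (θ : ℂ) + q) z) ∧
        (∀ z : ℂ, ‖z‖ = 1 → 0 ≤ trigPoly (2 * N) (Pi.single 0 (θ : ℂ) + -q) z) := by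
        simp only [trigPoly_add, trigPoly_neg, trigPoly_single_zero, ← forall_and]
        simp only [← sub_eq_add_neg]
        exact forall₂_congr fun z hz => norm_le_iff_nonneg_add_and_nonneg_sub (hreal z hz)
    _ ↔ _ := by
        have h0 : (0 : ℤ) ∈ Finset.Icc (-((2 * N : ℕ) : ℤ)) ((2 * N : ℕ) : ℤ) := by simp
        simp only [trigPoly_nonneg_on_circle_iff_exists_posSemidef,
          forall_single_add_eq_iff h0 hq0,
          forall_single_add_eq_iff (c := -q) h0 (by simp [hq0]), Pi.neg_apply]
        exact ⟨fun ⟨⟨Q₁, h₁⟩, ⟨Q₂, h₂⟩⟩ => ⟨Q₁, Q₂, h₁.1, h₂.1, h₁.2.1, h₁.2.2, h₂.2.1, h₂.2.2⟩,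
          fun ⟨Q₁, Q₂, h⟩ => ⟨⟨Q₁, h.1, h.2.2.1, h.2.2.2.1⟩, ⟨Q₂, h.2.1, h.2.2.2.2⟩⟩⟩

/-- Semidefinite representability of the peak power.
Let `q(z) = ∑_{k=-2N}^{2N} q_k z^{-k}` be a trigonometric polynomial with
`q_{-k} = conj (q_k)` and `q_0 = 0`. Then `θ ≥ max_{|z|=1} |q(z)|` iff there
exist positive semidefinite Hermitian matrices `Q₁, Q₂` of size `2N+1` with
`θ = tr(Λ₀ Q₁)`, `q_k = tr(Λ_k Q₁)` for `k ≠ 0`, `θ = tr(Λ₀ Q₂)`, and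
`-q_k = tr(Λ_k Q₂)` for `k ≠ 0`. -/
theorem peak_power_semidefinite_representation (N : ℕ) (hN : 1 ≤ N)
    (q : ℤ → ℂ) (hsymm : ∀ k : ℤ, q (-k) = star (q k)) (hq0 : q 0 = 0)
    (θ : ℝ) :
    (∀ z : ℂ, ‖z‖ = 1 →
        ‖∑ k ∈ Finset.Icc (-(2 * N : ℤ)) (2 * N : ℤ),
          q k * z ^ (-k)‖ ≤ θ) ↔
    (∃ Q₁ Q₂ : Matrix (Fin (2 * N + 1)) (Fin (2 * N + 1)) ℂ,
        Q₁.PosSemidef ∧ Q₂.PosSemidef ∧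
        (θ : ℂ) = (elemToeplitz (2 * N) 0 * Q₁).trace ∧
        (∀ k ∈ Finset.Icc (-(2 * N : ℤ)) (2 * N : ℤ), k ≠ 0 →
          q k = (elemToeplitz (2 * N) k * Q₁).trace) ∧
        (θ : ℂ) = (elemToeplitz (2 * N) 0 * Q₂).trace ∧
        (∀ k ∈ Finset.Icc (-(2 * N : ℤ)) (2 * N : ℤ), k ≠ 0 →
          -q k = (elemToeplitz (2 * N) k * Q₂).trace)) :=
  peak_power_semidefinite_representation_general N q hsymm hq0 θ
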